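/- For every positive integer m, the 4-coloring of [8m+4] given by the prefix B, A, C, then the block ABCC repeated m times, then the block DDAB repeated m times, then a final element colored D, is equinumerous and contains no rainbow 4-term arithmetic progression. -/
import Mathlib


inductive Color | A | B | C | D
  deriving DecidableEq

open Color

/-- A coloring `c` of `{1,...,n}` contains a rainbow 4-term AP. -/
def RainbowAP4 (n : ℕ) (c : ℕ → Color) : Prop :=
  ∃ t d : ℕ, 1 ≤ t ∧ 1 ≤ d ∧ t + 3*d ≤ n ∧
    c t ≠ c (t+d) ∧ c t ≠ c (t+2*d) ∧ c t ≠ c (t+3*d) ∧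
    c (t+d) ≠ c (t+2*d) ∧ c (t+d) ≠ c (t+3*d) ∧ c (t+2*d) ≠ c (t+3*d)

/-- The coloring for STATEMENT 6. -/
def col (m i : ℕ) : Color :=
  if i = 1 then B else if i = 2 then A else if i = 3 then C else if i ≤ 4*m+3 then (if i % 4 = 0 then A else if i % 4 = 1 then B else C) else if i ≤ 8*m+3 then (if i % 4 = 0 ∨ i % 4 = 1 then D else if i % 4 = 2 then A else B) else D

/-! ### Auxiliary definitions and lemmas -/

def g1 (r : ℕ) : Color := if r = 0 then A else if r = 1 then B else C
def g2 (r : ℕ) : Color := if r = 0 ∨ r = 1 then D else if r = 2 then A else B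

lemma col_char (m i : ℕ) (h2 : i ≤ 8*m+4) :
    col m i = if i = 2 then A else if i ≤ 4*m+3 then g1 (i%4) else g2 (i%4) := by
  unfold col g1 g2
  split_ifs <;> first | rfl | omega

set_option maxHeartbeats 2000000 in
lemma no_rainbow (m : ℕ) (hm : 0 < m) : ¬ RainbowAP4 (8*m+4) (col m) := by
  rintro ⟨t, d, ht, hd, hle, h1, h2, h3, h4, h5, h6⟩
  simp only [col_char m t (by omega), col_char m (t+d) (by omega),
    col_char m (t+2*d) (by omega), col_char m (t+3*d) (by omega)] at h1 h2 h3 h4 h5 h6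
  by_cases e1 : t + d = 2
  · have ht1 : t = 1 := by omega
    have hd1 : d = 1 := by omega
    subst ht1; subst hd1
    norm_num [g1, g2, show (4:ℕ) ≤ 4*m+3 by omega] at h5
  · have e2 : t + 2*d ≠ 2 := by omega
    have e3 : t + 3*d ≠ 2 := by omega
    simp only [if_neg e1, if_neg e2, if_neg e3] at h1 h2 h3 h4 h5 h6
    simp only [show (t+d)%4 = (t%4 + d%4)%4 from by omega,
      show (t+2*d)%4 = (t%4 + 2*(d%4))%4 from by omega,
      show (t+3*d)%4 = (t%4 + 3*(d%4))%4 from by omega] at h1 h2 h3 h4 h5 h6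
    have hr : t%4 = 0 ∨ t%4 = 1 ∨ t%4 = 2 ∨ t%4 = 3 := by omega
    have hs : d%4 = 0 ∨ d%4 = 1 ∨ d%4 = 2 ∨ d%4 = 3 := by omega
    rcases hr with ht4|ht4|ht4|ht4 <;> rcases hs with hd4|hd4|hd4|hd4 <;>
      simp only [ht4, hd4] at h1 h2 h3 h4 h5 h6 <;>
      norm_num [g1, g2] at h1 h2 h3 h4 h5 h6 <;>
      split_ifs at h1 h2 h3 h4 h5 h6 <;>
      first | exact h1 rfl | exact h2 rfl | exact h3 rfl | exact h4 rfl
            | exact h5 rfl | exact h6 rfl | omega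

def fA (m i : ℕ) : ℕ := if i = 0 then 2 else if i ≤ m then 4*i else 4*i+2
def fB (m i : ℕ) : ℕ := if i = 0 then 1 else if i ≤ m then 4*i+1 else 4*i+3
def fC (m i : ℕ) : ℕ := if i = 0 then 3 else if i % 2 = 1 then 2*i+4 else 2*i+3
def fD (m i : ℕ) : ℕ := if i = 0 then 8*m+4 else if i % 2 = 1 then 2*i+4*m+2 else 2*i+4*m+1

lemma colA (m j : ℕ) (h : j = 2 ∨ (j % 4 = 0 ∧ 4 ≤ j ∧ j ≤ 4*m+3) ∨ (j % 4 = 2 ∧ 4*m+4 ≤ j ∧ j ≤ 8*m+3)) : col m j = A := by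
  unfold col; split_ifs <;> first | rfl | omega

lemma colA' (m a : ℕ) (h1 : 1 ≤ a) (h2 : a ≤ 8*m+4) (hc : col m a = A) :
    a = 2 ∨ (a % 4 = 0 ∧ 4 ≤ a ∧ a ≤ 4*m+3) ∨ (a % 4 = 2 ∧ 4*m+4 ≤ a ∧ a ≤ 8*m+3) := by
  unfold col at hc; split_ifs at hc <;> first | exact absurd hc (by decide) | omega

lemma colB (m j : ℕ) (h : j = 1 ∨ (j % 4 = 1 ∧ 4 ≤ j ∧ j ≤ 4*m+3) ∨ (j % 4 = 3 ∧ 4*m+4 ≤ j ∧ j ≤ 8*m+3)) : col m j = B := by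
  unfold col; split_ifs <;> first | rfl | omega

lemma colB' (m a : ℕ) (h1 : 1 ≤ a) (h2 : a ≤ 8*m+4) (hc : col m a = B) :
    a = 1 ∨ (a % 4 = 1 ∧ 4 ≤ a ∧ a ≤ 4*m+3) ∨ (a % 4 = 3 ∧ 4*m+4 ≤ a ∧ a ≤ 8*m+3) := by
  unfold col at hc; split_ifs at hc <;> first | exact absurd hc (by decide) | omega

lemma colC (m j : ℕ) (h : j = 3 ∨ ((j % 4 = 2 ∨ j % 4 = 3) ∧ 4 ≤ j ∧ j ≤ 4*m+3)) : col m j = C := by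
  unfold col; split_ifs <;> first | rfl | omega

lemma colC' (m a : ℕ) (h1 : 1 ≤ a) (h2 : a ≤ 8*m+4) (hc : col m a = C) :
    a = 3 ∨ ((a % 4 = 2 ∨ a % 4 = 3) ∧ 4 ≤ a ∧ a ≤ 4*m+3) := by
  unfold col at hc; split_ifs at hc <;> first | exact absurd hc (by decide) | omega

lemma colD (m j : ℕ) (h : j = 8*m+4 ∨ ((j % 4 = 0 ∨ j % 4 = 1) ∧ 4*m+4 ≤ j ∧ j ≤ 8*m+3)) (hm : 0 < m) : col m j = D := by
  unfold col; split_ifs <;> first | rfl | omega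

lemma colD' (m a : ℕ) (h1 : 1 ≤ a) (h2 : a ≤ 8*m+4) (hc : col m a = D) :
    a = 8*m+4 ∨ ((a % 4 = 0 ∨ a % 4 = 1) ∧ 4*m+4 ≤ a ∧ a ≤ 8*m+3) := by
  unfold col at hc; split_ifs at hc <;> first | exact absurd hc (by decide) | omega

lemma countA (m : ℕ) (hm : 0 < m) :
    ((Finset.Icc 1 (8*m+4)).filter (fun i => col m i = A)).card = 2*m+1 := by
  apply Finset.card_eq_of_bijective (fun i _ => fA m i)
  · intro a ha
    simp only [Finset.mem_filter, Finset.mem_Icc] at ha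
    obtain ⟨⟨ha1, ha2⟩, hc⟩ := ha
    rcases colA' m a ha1 ha2 hc with h | h | h
    · exact ⟨0, by omega, by show fA m 0 = a; simp [fA]; omega⟩
    · exact ⟨a/4, by omega, by show fA m (a/4) = a; unfold fA; split_ifs <;> omega⟩
    · exact ⟨a/4, by omega, by show fA m (a/4) = a; unfold fA; split_ifs <;> omega⟩
  · intro i hi
    simp only [Finset.mem_filter, Finset.mem_Icc]
    have hb : 1 ≤ fA m i ∧ fA m i ≤ 8*m+4 ∧ (fA m i = 2 ∨ (fA m i % 4 = 0 ∧ 4 ≤ fA m i ∧ fA m i ≤ 4*m+3) ∨ (fA m i % 4 = 2 ∧ 4*m+4 ≤ fA m i ∧ fA m i ≤ 8*m+3)) := by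
      unfold fA; split_ifs <;> omega
    exact ⟨⟨hb.1, hb.2.1⟩, colA m _ hb.2.2⟩
  · intro i j hi hj hij
    unfold fA at hij; split_ifs at hij <;> omega

lemma countB (m : ℕ) (hm : 0 < m) :
    ((Finset.Icc 1 (8*m+4)).filter (fun i => col m i = B)).card = 2*m+1 := by
  apply Finset.card_eq_of_bijective (fun i _ => fB m i)
  · intro a ha
    simp only [Finset.mem_filter, Finset.mem_Icc] at ha
    obtain ⟨⟨ha1, ha2⟩, hc⟩ := ha
    rcases colB' m a ha1 ha2 hc with h | h | h
    · exact ⟨0, by omega, by show fB m 0 = a; simp [fB]; omega⟩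
    · exact ⟨a/4, by omega, by show fB m (a/4) = a; unfold fB; split_ifs <;> omega⟩
    · exact ⟨a/4, by omega, by show fB m (a/4) = a; unfold fB; split_ifs <;> omega⟩
  · intro i hi
    simp only [Finset.mem_filter, Finset.mem_Icc]
    have hb : 1 ≤ fB m i ∧ fB m i ≤ 8*m+4 ∧ (fB m i = 1 ∨ (fB m i % 4 = 1 ∧ 4 ≤ fB m i ∧ fB m i ≤ 4*m+3) ∨ (fB m i % 4 = 3 ∧ 4*m+4 ≤ fB m i ∧ fB m i ≤ 8*m+3)) := by
      unfold fB; split_ifs <;> omega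
    exact ⟨⟨hb.1, hb.2.1⟩, colB m _ hb.2.2⟩
  · intro i j hi hj hij
    unfold fB at hij; split_ifs at hij <;> omega

lemma countC (m : ℕ) (hm : 0 < m) :
    ((Finset.Icc 1 (8*m+4)).filter (fun i => col m i = C)).card = 2*m+1 := by
  apply Finset.card_eq_of_bijective (fun i _ => fC m i)
  · intro a ha
    simp only [Finset.mem_filter, Finset.mem_Icc] at ha
    obtain ⟨⟨ha1, ha2⟩, hc⟩ := ha
    rcases colC' m a ha1 ha2 hc with h | ⟨h25 | h25, h4, h43⟩
    · exact ⟨0, by omega, by show fC m 0 = a; simp [fC]; omega⟩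
    · exact ⟨(a-4)/2, by omega, by show fC m ((a-4)/2) = a; unfold fC; split_ifs <;> omega⟩
    · exact ⟨(a-3)/2, by omega, by show fC m ((a-3)/2) = a; unfold fC; split_ifs <;> omega⟩
  · intro i hi
    simp only [Finset.mem_filter, Finset.mem_Icc]
    have hb : 1 ≤ fC m i ∧ fC m i ≤ 8*m+4 ∧ (fC m i = 3 ∨ ((fC m i % 4 = 2 ∨ fC m i % 4 = 3) ∧ 4 ≤ fC m i ∧ fC m i ≤ 4*m+3)) := by
      unfold fC; split_ifs <;> omega
    exact ⟨⟨hb.1, hb.2.1⟩, colC m _ hb.2.2⟩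
  · intro i j hi hj hij
    unfold fC at hij; split_ifs at hij <;> omega

lemma countD (m : ℕ) (hm : 0 < m) :
    ((Finset.Icc 1 (8*m+4)).filter (fun i => col m i = D)).card = 2*m+1 := by
  apply Finset.card_eq_of_bijective (fun i _ => fD m i)
  · intro a ha
    simp only [Finset.mem_filter, Finset.mem_Icc] at ha
    obtain ⟨⟨ha1, ha2⟩, hc⟩ := ha
    rcases colD' m a ha1 ha2 hc with h | ⟨h01 | h01, h4, h83⟩
    · exact ⟨0, by omega, by show fD m 0 = a; simp [fD]; omega⟩
    · exact ⟨(a-4*m-2)/2, by omega, by show fD m ((a-4*m-2)/2) = a; unfold fD; split_ifs <;> omega⟩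
    · exact ⟨(a-4*m-1)/2, by omega, by show fD m ((a-4*m-1)/2) = a; unfold fD; split_ifs <;> omega⟩
  · intro i hi
    simp only [Finset.mem_filter, Finset.mem_Icc]
    have hb : 1 ≤ fD m i ∧ fD m i ≤ 8*m+4 ∧ (fD m i = 8*m+4 ∨ ((fD m i % 4 = 0 ∨ fD m i % 4 = 1) ∧ 4*m+4 ≤ fD m i ∧ fD m i ≤ 8*m+3)) := by
      unfold fD; split_ifs <;> omega
    exact ⟨⟨hb.1, hb.2.1⟩, colD m _ hb.2.2 hm⟩
  · intro i j hi hj hij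
    unfold fD at hij; split_ifs at hij <;> omega

theorem stmt_6 (m : ℕ) (hm : 0 < m) :
    (∀ x : Color, ((Finset.Icc 1 (8*m+4)).filter (fun i => col m i = x)).card = 2*m+1) ∧ ¬ RainbowAP4 (8*m+4) (col m) := by
  refine ⟨?_, no_rainbow m hm⟩
  intro x
  cases x with
  | A => exact countA m hm
  | B => exact countB m hm
  | C => exact countC m hm
  | D => exact countD m hm
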